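/- Let F be a field and for α ∈ F let A_{3,4}^α be the 3-dimensional non-unital associative F-algebra with basis a, b, c and nonzero products a² = αc, ab = c, b² = c. Then for α, β ∈ F, the algebras A_{3,4}^α and A_{3,4}^β are isomorphic if and only if α = β. -/

import Mathlib

/-- The multiplication table of `A_{3,4}^α` on a basis `a = v 0`, `b = v 1`, `c = v 2`:
`a² = αc`, `ab = c`, `b² = c`, and all other products of basis elements zero
(in particular `ba = 0`). -/
def IsA34Basis {F A : Type*} [Field F] [NonUnitalRing A] [Module F A]
    (α : F) (v : Module.Basis (Fin 3) F A) : Prop :=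
  v 0 * v 0 = α • v 2 ∧ v 0 * v 1 = v 2 ∧ v 1 * v 1 = v 2 ∧
  v 1 * v 0 = 0 ∧ v 0 * v 2 = 0 ∧ v 2 * v 0 = 0 ∧
  v 1 * v 2 = 0 ∧ v 2 * v 1 = 0 ∧ v 2 * v 2 = 0

/-!
Every product in `A_{3,4}^β` lies on the line `F c`, and its `c`-coordinate `φ(x, y)` is a
bilinear form whose Gram matrix on `a, b` is `M = [[β, 1], [0, 1]]`. A change of basis `P` and a
rescaling of `c` multiply both `det M = β` and `det (M - Mᵀ) = 1` by the same factor, so their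
ratio `β` is an isomorphism invariant; concretely it is the identity
`φ(x,x) φ(y,y) - φ(x,y) φ(y,x) = β (φ(x,y) - φ(y,x))²`.
Evaluated at the images of `a, b` under an isomorphism `A_{3,4}^α ≃ A_{3,4}^β`, it reads
`α L² = β L²`, where `L ≠ 0` is the `c`-coordinate of the image of `c`.
-/

lemma map_mul_of_map_basis_mul {R ι A B : Type*} [CommSemiring R]
    [NonUnitalNonAssocSemiring A] [Module R A] [SMulCommClass R A A] [IsScalarTower R A A]
    [NonUnitalNonAssocSemiring B] [Module R B] [SMulCommClass R B B] [IsScalarTower R B B]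
    (v : Module.Basis ι R A) (e : A →ₗ[R] B)
    (h : ∀ i j, e (v i * v j) = e (v i) * e (v j)) (x y : A) :
    e (x * y) = e x * e y := by
  have : (LinearMap.mul R A).compr₂ e = (LinearMap.mul R B).compl₁₂ e e :=
    LinearMap.ext_basis v v h
  exact LinearMap.congr_fun₂ this x y

namespace IsA34Basis

variable {F A : Type*} [Field F] [NonUnitalRing A] [Module F A]
  [SMulCommClass F A A] [IsScalarTower F A A] {β : F} {w : Module.Basis (Fin 3) F A}

lemma mul_eq (hw : IsA34Basis β w) (x y : A) :
    x * y = (β * (w.repr x 0 * w.repr y 0) + w.repr x 0 * w.repr y 1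
      + w.repr x 1 * w.repr y 1) • w 2 := by
  obtain ⟨h00, h01, h11, h10, h02, h20, h12, h21, h22⟩ := hw
  conv_lhs => rw [← w.sum_repr x, ← w.sum_repr y]
  simp only [Fin.sum_univ_three, add_mul, mul_add, smul_mul_assoc, mul_smul_comm, h00, h01,
    h11, h10, h02, h20, h12, h21, h22, smul_zero, add_zero, smul_smul]
  module

lemma repr_mul (hw : IsA34Basis β w) (x y : A) :
    w.repr (x * y) 2 = β * (w.repr x 0 * w.repr y 0) + w.repr x 0 * w.repr y 1
      + w.repr x 1 * w.repr y 1 := by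
  rw [hw.mul_eq]
  simp

lemma mul_eq_repr_mul_smul (hw : IsA34Basis β w) (x y : A) :
    x * y = w.repr (x * y) 2 • w 2 := by
  rw [hw.repr_mul, hw.mul_eq]

lemma repr_mul_det (hw : IsA34Basis β w) (x y : A) :
    w.repr (x * x) 2 * w.repr (y * y) 2 - w.repr (x * y) 2 * w.repr (y * x) 2
      = β * (w.repr (x * y) 2 - w.repr (y * x) 2) ^ 2 := by
  simp only [hw.repr_mul]
  ring

end IsA34Basis

/-- For `α, β ∈ F`, the algebras `A_{3,4}^α` and `A_{3,4}^β` are isomorphic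
if and only if `α = β`. -/
theorem stmt10 {F A B : Type*} [Field F]
    [NonUnitalRing A] [Module F A] [SMulCommClass F A A] [IsScalarTower F A A]
    [NonUnitalRing B] [Module F B] [SMulCommClass F B B] [IsScalarTower F B B]
    (α β : F)
    (v : Module.Basis (Fin 3) F A) (w : Module.Basis (Fin 3) F B)
    (hv : IsA34Basis α v) (hw : IsA34Basis β w) :
    (∃ e : A ≃ₗ[F] B, ∀ x y : A, e (x * y) = e x * e y) ↔ α = β := by
  constructor
  · rintro ⟨e, he⟩
    obtain ⟨h00, h01, h11, h10, -⟩ := hv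
    set L := w.repr (e (v 2)) 2
    have hL : L ≠ 0 := by
      intro h0
      have hc : e (v 2) = L • w 2 := by rw [← h01, he, hw.mul_eq_repr_mul_smul, ← he, h01]
      rw [h0, zero_smul, map_eq_zero_iff e e.injective] at hc
      exact v.ne_zero 2 hc
    have key := hw.repr_mul_det (e (v 0)) (e (v 1))
    simp only [← he, h00, h01, h11, h10, map_smul, map_zero, Finsupp.smul_apply, smul_eq_mul,
      Finsupp.zero_apply] at key
    exact mul_right_cancel₀ (pow_ne_zero 2 hL) (by linear_combination key)
  · rintro rfl
    refine ⟨v.equiv w (Equiv.refl _), map_mul_of_map_basis_mul v _ fun i j => ?_⟩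
    obtain ⟨h00, h01, h11, h10, h02, h20, h12, h21, h22⟩ := hv
    obtain ⟨k00, k01, k11, k10, k02, k20, k12, k21, k22⟩ := hw
    fin_cases i <;> fin_cases j <;>
      simp [h00, h01, h11, h10, h02, h20, h12, h21, h22, k00, k01, k11, k10, k02, k20, k12,
        k21, k22]
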